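/- Let k ≥ 1, let P, Q, R, S be Hermitian positive definite k×k complex matrices, and let φ, ψ, η, ξ, a, b > 0 be real numbers. Then the generalized beta-logarithmic matrix function has the trigonometric integral representation BL_{(φ,ψ)}^{(R,S,η,ξ)}(a,b;P,Q) = 2a ∫_0^{π/2} (b/a)^{sin²θ} · (sin θ)^{2P−I} (cos θ)^{2Q−I} E_{φ,ψ}(−R (csc θ)^{2η}) E_{φ,ψ}(−S (sec θ)^{2ξ}) dθ, obtained from the substitution x = sin²θ. -/

import Mathlib

open MeasureTheory Real
open scoped Matrix.Norms.L2Operator ComplexOrder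

noncomputable section

/-- For a real `t > 0` and a square complex matrix `A`, `t ^ A := exp (A · log t)`. -/
def mpow {k : ℕ} (t : ℝ) (A : Matrix (Fin k) (Fin k) ℂ) : Matrix (Fin k) (Fin k) ℂ :=
  NormedSpace.exp ((Real.log t : ℂ) • A)

/-- The two-parameter matrix Mittag-Leffler function `E_{φ,ψ}(A) = ∑ Aⁿ / Γ(φn + ψ)`. -/
def mittagLeffler {k : ℕ} (φ ψ : ℝ) (A : Matrix (Fin k) (Fin k) ℂ) :
    Matrix (Fin k) (Fin k) ℂ :=
  ∑' n : ℕ, (Real.Gamma (φ * n + ψ))⁻¹ • A ^ n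

/-- The integrand of the generalized beta-logarithmic matrix function:
`a^{1-x} b^x · x^{P-I} (1-x)^{Q-I} E_{φ,ψ}(−R x^{−η}) E_{φ,ψ}(−S (1−x)^{−ξ})`. -/
def gblKernel {k : ℕ} (φ ψ η ξ : ℝ) (R S : Matrix (Fin k) (Fin k) ℂ) (a b : ℝ)
    (P Q : Matrix (Fin k) (Fin k) ℂ) (x : ℝ) : Matrix (Fin k) (Fin k) ℂ :=
  (a ^ (1 - x) * b ^ x : ℝ) •
    (mpow x (P - 1) * mpow (1 - x) (Q - 1) *
      mittagLeffler φ ψ ((-(x ^ (-η)) : ℝ) • R) *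
      mittagLeffler φ ψ ((-((1 - x) ^ (-ξ)) : ℝ) • S))

/-- The generalized beta-logarithmic matrix function `BL_{(φ,ψ)}^{(R,S,η,ξ)}(a,b;P,Q)`. -/
def GBL {k : ℕ} (φ ψ η ξ : ℝ) (R S : Matrix (Fin k) (Fin k) ℂ) (a b : ℝ)
    (P Q : Matrix (Fin k) (Fin k) ℂ) : Matrix (Fin k) (Fin k) ℂ :=
  ∫ x in Set.Ioo (0 : ℝ) 1, gblKernel φ ψ η ξ R S a b P Q x

/-- The generalized beta matrix function `B_{(φ,ψ)}^{(R,S,η,ξ)}(P,Q) = BL(1,1;P,Q)`. -/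
def GB {k : ℕ} (φ ψ η ξ : ℝ) (R S : Matrix (Fin k) (Fin k) ℂ)
    (P Q : Matrix (Fin k) (Fin k) ℂ) : Matrix (Fin k) (Fin k) ℂ :=
  GBL φ ψ η ξ R S 1 1 P Q

/-! Substitute `x = sin² θ`, so that `1 - x = cos² θ` and `dx = 2 sin θ cos θ dθ`. The scalar
factor becomes `a^{1-x} b^x = a (b/a)^x`, and the Jacobian factors `sin θ`, `cos θ` are absorbed
into the matrix powers through `t · (t²)^{P-I} = t^{2P-I}`, which holds because `t^{A+I} = t · t^A`
(the identity commutes with everything, so the exponential splits). -/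

section

variable {k : ℕ}

lemma mpow_add_one {t : ℝ} (ht : 0 < t) (A : Matrix (Fin k) (Fin k) ℂ) :
    mpow t (A + 1) = t • mpow t A := by
  have hcomm : Commute ((Real.log t : ℂ) • A) ((Real.log t : ℂ) • 1) :=
    ((Commute.one_right A).smul_right _).smul_left _
  rw [mpow, smul_add, Matrix.exp_add_of_commute _ _ hcomm, ← Algebra.algebraMap_eq_smul_one,
    ← NormedSpace.algebraMap_exp_comm, ← Complex.exp_eq_exp_ℂ, ← Complex.ofReal_exp,
    Real.exp_log ht, ← Algebra.commutes, ← Algebra.smul_def, Complex.coe_smul, mpow]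

lemma mpow_pow (t : ℝ) (n : ℕ) (A : Matrix (Fin k) (Fin k) ℂ) :
    mpow (t ^ n) A = mpow t (n • A) := by
  rw [mpow, mpow, Real.log_pow, ← Nat.cast_smul_eq_nsmul ℂ, smul_smul]
  push_cast
  ring_nf

lemma smul_mpow_sq_sub_one {s : ℝ} (hs : 0 < s) (P : Matrix (Fin k) (Fin k) ℂ) :
    s • mpow (s ^ 2) (P - 1) = mpow s (2 • P - 1) := by
  rw [mpow_pow, ← mpow_add_one hs, smul_sub, two_nsmul, two_nsmul]
  abel_nf

end

lemma Real.rpow_one_sub_mul_rpow {a b : ℝ} (ha : 0 < a) (hb : 0 ≤ b) (x : ℝ) :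
    a ^ (1 - x) * b ^ x = a * (b / a) ^ x := by
  have hax : a ^ x ≠ 0 := (Real.rpow_pos_of_pos ha x).ne'
  rw [Real.div_rpow hb ha.le, Real.rpow_sub ha, Real.rpow_one]
  field_simp

lemma strictMonoOn_sin_sq : StrictMonoOn (fun θ : ℝ => sin θ ^ 2) (Set.Icc 0 (π / 2)) := by
  intro x hx y hy hxy
  have hsub : Set.Icc 0 (π / 2) ⊆ Set.Icc (-(π / 2)) (π / 2) :=
    Set.Icc_subset_Icc_left (by linarith [pi_pos])
  exact pow_lt_pow_left₀ (strictMonoOn_sin (hsub hx) (hsub hy) hxy)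
    (sin_nonneg_of_nonneg_of_le_pi hx.1 (by linarith [hx.2, pi_pos])) two_ne_zero

lemma image_sin_sq_Ioo : (fun θ : ℝ => sin θ ^ 2) '' Set.Ioo 0 (π / 2) = Set.Ioo 0 1 := by
  rw [ContinuousOn.image_Ioo_of_strictMonoOn (by positivity) (by fun_prop) strictMonoOn_sin_sq]
  simp

theorem integral_Ioo_zero_one_eq_integral_sin_sq {E : Type*} [NormedAddCommGroup E]
    [NormedSpace ℝ E] (f : ℝ → E) :
    ∫ x in Set.Ioo (0 : ℝ) 1, f x =
      ∫ θ in Set.Ioo 0 (π / 2), (2 * sin θ * cos θ) • f (sin θ ^ 2) := by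
  have hderiv : ∀ θ ∈ Set.Ioo 0 (π / 2),
      HasDerivWithinAt (fun θ : ℝ => sin θ ^ 2) (2 * sin θ * cos θ) (Set.Ioo 0 (π / 2)) θ :=
    fun θ _ => by simpa [mul_comm, mul_assoc] using ((hasDerivAt_sin θ).fun_pow 2).hasDerivWithinAt
  rw [← image_sin_sq_Ioo, integral_image_eq_integral_abs_deriv_smul measurableSet_Ioo hderiv
    (strictMonoOn_sin_sq.injOn.mono Set.Ioo_subset_Icc_self)]
  refine setIntegral_congr_fun measurableSet_Ioo fun θ ⟨h0, h1⟩ => ?_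
  have hs : 0 < sin θ := sin_pos_of_pos_of_lt_pi h0 (by linarith [pi_pos])
  have hc : 0 < cos θ := cos_pos_of_mem_Ioo ⟨by linarith [pi_pos], h1⟩
  rw [abs_of_pos (by positivity)]

lemma smul_gblKernel_sq {k : ℕ} (φ ψ η ξ : ℝ) (R S : Matrix (Fin k) (Fin k) ℂ) {a b : ℝ}
    (ha : 0 < a) (hb : 0 ≤ b) (P Q : Matrix (Fin k) (Fin k) ℂ) {s c : ℝ} (hs : 0 < s)
    (hc : 0 < c) (hsc : s ^ 2 + c ^ 2 = 1) :
    (2 * s * c) • gblKernel φ ψ η ξ R S a b P Q (s ^ 2) =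
      (2 * a) • ((b / a) ^ (s ^ 2) •
        (mpow s (2 • P - 1) * mpow c (2 • Q - 1) *
          mittagLeffler φ ψ ((-(s ^ (-(2 * η)))) • R) *
          mittagLeffler φ ψ ((-(c ^ (-(2 * ξ)))) • S))) := by
  have hc2 : 1 - s ^ 2 = c ^ 2 := by linarith
  rw [gblKernel, Real.rpow_one_sub_mul_rpow ha hb, hc2, ← Real.rpow_natCast_mul hs.le,
    ← Real.rpow_natCast_mul hc.le, Nat.cast_ofNat, mul_neg, mul_neg, ← smul_mpow_sq_sub_one hs,
    ← smul_mpow_sq_sub_one hc]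
  simp only [smul_mul_assoc, mul_smul_comm, smul_smul]
  congr 1
  ring

theorem GBL_trig_integral_general {k : ℕ} (P Q R S : Matrix (Fin k) (Fin k) ℂ)
    (φ ψ η ξ a b : ℝ) (ha : 0 < a) (hb : 0 < b) :
    GBL φ ψ η ξ R S a b P Q =
      (2 * a : ℝ) • ∫ θ in Set.Ioo (0 : ℝ) (π / 2),
        (((b / a) ^ (Real.sin θ ^ 2) : ℝ) •
          (mpow (Real.sin θ) (2 • P - 1) * mpow (Real.cos θ) (2 • Q - 1) *
            mittagLeffler φ ψ ((-(Real.sin θ ^ (-(2 * η))) : ℝ) • R) *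
            mittagLeffler φ ψ ((-(Real.cos θ ^ (-(2 * ξ))) : ℝ) • S))) := by
  rw [GBL, integral_Ioo_zero_one_eq_integral_sin_sq, ← integral_smul]
  refine setIntegral_congr_fun measurableSet_Ioo fun θ ⟨h0, h1⟩ => ?_
  exact smul_gblKernel_sq φ ψ η ξ R S ha hb.le P Q
    (sin_pos_of_pos_of_lt_pi h0 (by linarith [pi_pos]))
    (cos_pos_of_mem_Ioo ⟨by linarith [pi_pos], h1⟩) (sin_sq_add_cos_sq θ)

theorem GBL_trig_integral {k : ℕ} (hk : 1 ≤ k) (P Q R S : Matrix (Fin k) (Fin k) ℂ)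
    (hP : P.PosDef) (hQ : Q.PosDef) (hR : R.PosDef) (hS : S.PosDef)
    (φ ψ η ξ a b : ℝ) (hφ : 0 < φ) (hψ : 0 < ψ) (hη : 0 < η) (hξ : 0 < ξ)
    (ha : 0 < a) (hb : 0 < b)
    (hInt : IntegrableOn (gblKernel φ ψ η ξ R S a b P Q) (Set.Ioo 0 1)) :
    GBL φ ψ η ξ R S a b P Q =
      (2 * a : ℝ) • ∫ θ in Set.Ioo (0 : ℝ) (π / 2),
        (((b / a) ^ (Real.sin θ ^ 2) : ℝ) •
          (mpow (Real.sin θ) (2 • P - 1) * mpow (Real.cos θ) (2 • Q - 1) *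
            mittagLeffler φ ψ ((-(Real.sin θ ^ (-(2 * η))) : ℝ) • R) *
            mittagLeffler φ ψ ((-(Real.cos θ ^ (-(2 * ξ))) : ℝ) • S))) :=
  GBL_trig_integral_general P Q R S φ ψ η ξ a b ha hb
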